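/- Matching a ground term against a pattern grounds all strictly occurring variables: if t is a ground term, p is a term, and σ is a substitution with p[σ] = t, then for every variable x having a strict occurrence in p, the term σ(x) is ground. -/

import Mathlib

/-- First-order terms (a simplified instance of LF objects/types). -/
inductive Tm : Type where
  | var : Nat → Tm
  | const : Nat → Tm
  | app : Tm → Tm → Tm
deriving DecidableEq

/-- Substitutions as finite lists of bindings. -/
abbrev Subst := List (Nat × Tm)

def lookupS (σ : Subst) (x : Nat) : Tm :=
  match σ with
  | [] => Tm.var x
  | (y, M) :: σ' => if x = y then M else lookupS σ' x

def applyS (σ : Subst) : Tm → Tm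
  | Tm.var x => lookupS σ x
  | Tm.const c => Tm.const c
  | Tm.app t u => Tm.app (applyS σ t) (applyS σ u)

/-- Contexts assign types (terms) to variables. -/
abbrev Ctx := List (Nat × Tm)

/-- Composition of substitutions: ∅ ∘ θ = ∅, (σ, M/x) ∘ θ = (σ ∘ θ, M[θ]/x). -/
def compS (σ θ : Subst) : Subst := σ.map (fun p => (p.1, applyS θ p.2))

/-- Γ[σ]. -/
def ctxS (Γ : Ctx) (σ : Subst) : Ctx := Γ.map (fun p => (p.1, applyS σ p.2))

/-- The free variables of a term. -/
def FV : Tm → List Nat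
  | Tm.var x => [x]
  | Tm.const _ => []
  | Tm.app t u => FV t ++ FV u

/-- A term is ground if it has no free variables. -/
def Ground (t : Tm) : Prop := FV t = []

theorem FV_lookupS_subset_FV_applyS {σ : Subst} {x : Nat} :
    ∀ {p : Tm}, x ∈ FV p → FV (lookupS σ x) ⊆ FV (applyS σ p)
  | .var y, hx => by
    obtain rfl : x = y := List.mem_singleton.mp hx
    exact List.Subset.refl _
  | .app a b, hx => by
    rcases List.mem_append.mp hx with ha | hb
    · exact List.Subset.trans (FV_lookupS_subset_FV_applyS ha) (List.subset_append_left _ _)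
    · exact List.Subset.trans (FV_lookupS_subset_FV_applyS hb) (List.subset_append_right _ _)

/-- matching a ground term against a pattern grounds all
(strictly occurring) variables: in this first-order setting every occurrence
of a free variable is strict, so if `p[σ] = t` with `t` ground, then `σ x` is
ground for every free variable `x` of `p`. -/
theorem matching_grounds_strict_variables
    (t p : Tm) (σ : Subst)
    (ht : Ground t) (hmatch : applyS σ p = t) :
    ∀ x ∈ FV p, Ground (lookupS σ x) := by
  subst hmatch
  intro x hx
  exact List.subset_nil.mp (ht ▸ FV_lookupS_subset_FV_applyS hx)
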